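/- Let δ > 0 and δ_k = δ/2^k for k ≥ 0. For each k let v_k : ℕ_0^n → [0,∞) satisfy v_k(m+e_i) − v_k(m) ≥ a_i p_i δ_k for every i and v_k(m+1) − v_k(m) ≤ v_k(m)(e^{(c+λ)δ_k} − 1) for every m, and let V_k(x) := v_k(ρ^{δ_k}(x)) + a·(x − ⟨x⟩^{δ_k}). Assume V_k ≤ V_{k+1} pointwise on ℝ_+^n and that V̄(x) := lim_{k→∞} V_k(x) is finite for every x. Then V_k converges to V̄ uniformly on every compact subset of ℝ_+^n. -/

import Mathlib

/-!
Each `V_k` is monotone for the componentwise order: `v_k` grows by at least `aᵢ pᵢ δ_k` in the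
direction `eᵢ`, which is exactly what the linear term `a·(x − ⟨x⟩)` loses when `x` crosses a grid
hyperplane. In the direction `p` the `V_k` are also equicontinuous in `k`: shifting `x` by `t • p`
raises every grid index by at most `⌈t / δ_k⌉`, so the growth bound on `v_k(m + 1)` gives
`V_k(x + t p) − V_k(x) ≤ v_k(ρ x) (e^{(c+λ)(t+δ_k)} − 1) + t a·p`, where `v_k(ρ x) ≤ V_k(x)` is
bounded on a compact set because `V_k` converges at an upper corner of it. Every point of the
compact set lies between two neighbouring points of a finite grid of mesh `t • p`, where the
convergence is uniform, and monotonicity of `V_k` and `V̄` carries this over to the whole set.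
-/

open MeasureTheory Filter

noncomputable section

/-- The grid point associated with a multi-index `m`: `g^δ(m) = (p₁ δ m₁, …, pₙ δ mₙ)`. -/
def gdel (n : ℕ) (p : Fin n → ℝ) (δ : ℝ) (m : Fin n → ℕ) : Fin n → ℝ :=
  fun i => p i * δ * (m i : ℝ)

/-- The index of the closest grid point below `x`: `ρ^δ(x) = (⌊xᵢ/(δ pᵢ)⌋)ᵢ`. -/
def rho (n : ℕ) (p : Fin n → ℝ) (δ : ℝ) (x : Fin n → ℝ) : Fin n → ℕ :=
  fun i => ⌊x i / (δ * p i)⌋₊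

/-- The closest grid point below `x`: `⟨x⟩^δ = g^δ(ρ^δ(x))`. -/
def proj (n : ℕ) (p : Fin n → ℝ) (δ : ℝ) (x : Fin n → ℝ) : Fin n → ℝ :=
  gdel n p δ (rho n p δ x)

/-- The extension `V(x) = v(ρ^δ(x)) + a·(x − ⟨x⟩^δ)` of a grid function `v`. -/
def Vext (n : ℕ) (p a : Fin n → ℝ) (δ : ℝ) (v : (Fin n → ℕ) → ℝ) (x : Fin n → ℝ) : ℝ :=
  v (rho n p δ x) + ∑ i, a i * (x i - proj n p δ x i)

theorem monotone_of_le_add_single {ι β : Type*} [Finite ι] [DecidableEq ι] [Preorder β]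
    {f : (ι → ℕ) → β} (h : ∀ m i, f m ≤ f (m + Pi.single i 1)) : Monotone f := by
  have hadd : ∀ d m, f m ≤ f (m + d) := by
    intro d
    induction d using Pi.single_induction with
    | zero => simp
    | add d e hd he => exact fun m => (hd m).trans (by simpa only [add_assoc] using he (m + d))
    | single i k =>
      induction k with
      | zero => simp
      | succ k ih =>
        intro m
        rw [Pi.single_add, ← add_assoc]
        exact (ih m).trans (h _ i)
  intro m m' hm
  simpa only [add_tsub_cancel_of_le hm] using hadd (m' - m) m

theorem apply_add_nsmul_one_le {ι : Type*} {f : (ι → ℕ) → ℝ} {β : ℝ} (hβ : 0 ≤ β)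
    (h : ∀ m, f (m + 1) ≤ f m * β) (m : ι → ℕ) (r : ℕ) : f (m + r • 1) ≤ f m * β ^ r := by
  induction r with
  | zero => simp
  | succ r ih =>
    rw [succ_nsmul, ← add_assoc, pow_succ, ← mul_assoc]
    exact (h _).trans (mul_le_mul_of_nonneg_right ih hβ)

theorem tendstoUniformlyOn_of_finset_bracket {ι α : Type*} [Preorder α] {F : ι → α → ℝ}
    {f : α → ℝ} {l : Filter ι} {D K : Set α} (hKD : K ⊆ D)
    (hF : ∀ k, MonotoneOn (F k) D) (hf : MonotoneOn f D)
    (hlim : ∀ x ∈ D, Tendsto (F · x) l (nhds (f x)))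
    (hbracket : ∀ ε > 0, ∃ S : Finset α, ↑S ⊆ D ∧ ∀ᶠ k in l, ∀ x ∈ K,
      ∃ s ∈ S, ∃ t ∈ S, s ≤ x ∧ x ≤ t ∧ F k t - F k s ≤ ε) :
    TendstoUniformlyOn F f l K := by
  rw [Metric.tendstoUniformlyOn_iff]
  intro ε hε
  obtain ⟨S, hSD, hS⟩ := hbracket (ε / 2) (half_pos hε)
  have hclose : ∀ᶠ k in l, ∀ s ∈ S, dist (f s) (F k s) < ε / 2 :=
    S.eventually_all.2 fun s hs =>
      Metric.tendsto_nhds.1 (hlim s (hSD hs)) _ (half_pos hε) |>.mono fun _ h => by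
        rwa [dist_comm]
  filter_upwards [hS, hclose] with k hk hk' x hx
  obtain ⟨s, hs, t, ht, hsx, hxt, hst⟩ := hk x hx
  have hs' := hk' s hs
  have ht' := hk' t ht
  have hFsx := hF k (hSD hs) (hKD hx) hsx
  have hFxt := hF k (hKD hx) (hSD ht) hxt
  have hfsx := hf (hSD hs) (hKD hx) hsx
  have hfxt := hf (hKD hx) (hSD ht) hxt
  rw [Real.dist_eq, abs_lt] at hs' ht' ⊢
  -- `f x - F k x ≤ (f t - F k t) + (F k t - F k s)`,
  -- `F k x - f x ≤ (F k t - F k s) + (F k s - f s)`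
  constructor <;> linarith

theorem exists_finset_grid_bracket {ι : Type*} [Fintype ι] {w : ι → ℝ} (hw : ∀ i, 0 < w i)
    (M : ι → ℝ) : ∃ S : Finset (ι → ℝ), (S : Set (ι → ℝ)) ⊆ {x | 0 ≤ x} ∧
      ∀ x, 0 ≤ x → x ≤ M → ∃ s ∈ S, s + w ∈ S ∧ s ≤ x ∧ x ≤ s + w := by
  classical
  let grid : (ι → ℕ) → ι → ℝ := fun j i => w i * j i
  refine ⟨(Fintype.piFinset fun i => Finset.range (⌊M i / w i⌋₊ + 2)).image grid, ?_, ?_⟩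
  · intro x hx
    obtain ⟨j, -, rfl⟩ := Finset.mem_coe.1 hx |> Finset.mem_image.1
    exact fun i => mul_nonneg (hw i).le (Nat.cast_nonneg _)
  intro x hx0 hxM
  let j : ι → ℕ := fun i => ⌊x i / w i⌋₊
  have hjM : ∀ i, j i ≤ ⌊M i / w i⌋₊ := fun i =>
    Nat.floor_le_floor (div_le_div_of_nonneg_right (hxM i) (hw i).le)
  refine ⟨grid j, Finset.mem_image.2 ⟨j, ?_, rfl⟩, Finset.mem_image.2 ⟨j + 1, ?_, ?_⟩, ?_, ?_⟩
  · simp only [Fintype.mem_piFinset, Finset.mem_range]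
    exact fun i => by have := hjM i; omega
  · simp only [Fintype.mem_piFinset, Finset.mem_range, Pi.add_apply, Pi.one_apply]
    exact fun i => by have := hjM i; omega
  · funext i
    simp only [grid, Pi.add_apply, Pi.one_apply]
    push_cast
    ring
  · intro i
    have := Nat.floor_le (div_nonneg (hx0 i) (hw i).le)
    calc grid j i = w i * j i := rfl
      _ ≤ w i * (x i / w i) := mul_le_mul_of_nonneg_left this (hw i).le
      _ = x i := mul_div_cancel₀ _ (hw i).ne'
  · intro i
    have := Nat.lt_floor_add_one (x i / w i)
    calc x i = w i * (x i / w i) := (mul_div_cancel₀ _ (hw i).ne').symm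
      _ ≤ w i * (j i + 1) := mul_le_mul_of_nonneg_left this.le (hw i).le
      _ = (grid j + w) i := by simp only [grid, Pi.add_apply]; ring

theorem exists_pos_mul_exp_sub_one_add_le (B C A : ℝ) {ε : ℝ} (hε : 0 < ε) :
    ∃ t > 0, B * (Real.exp (C * (2 * t)) - 1) + t * A ≤ ε := by
  have hφ : Continuous fun t => B * (Real.exp (C * (2 * t)) - 1) + t * A := by fun_prop
  have hsmall := (hφ.tendsto 0).eventually (ge_mem_nhds (by simpa using hε))
  obtain ⟨t, htε, ht⟩ :=
    ((hsmall.filter_mono nhdsWithin_le_nhds).and (self_mem_nhdsWithin (s := Set.Ioi 0))).exists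
  exact ⟨t, ht, htε⟩

section Extension

variable {n : ℕ} {p a : Fin n → ℝ} {δ : ℝ} {v : (Fin n → ℕ) → ℝ}

theorem Vext_eq (x : Fin n → ℝ) :
    Vext n p a δ v x =
      v (rho n p δ x) - ∑ i, a i * p i * δ * rho n p δ x i + ∑ i, a i * x i := by
  simp only [Vext, proj, gdel, mul_sub, Finset.sum_sub_distrib, mul_assoc]
  ring

variable (hδ : 0 < δ) (hp : ∀ i, 0 < p i)
include hδ hp

theorem rho_mono : Monotone (rho n p δ) := fun _ _ hxy i =>
  Nat.floor_le_floor (div_le_div_of_nonneg_right (hxy i) (mul_pos hδ (hp i)).le)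

theorem proj_le {x : Fin n → ℝ} (hx : 0 ≤ x) : proj n p δ x ≤ x := by
  intro i
  have hδp := mul_pos hδ (hp i)
  calc proj n p δ x i = δ * p i * ⌊x i / (δ * p i)⌋₊ := by simp only [proj, gdel, rho]; ring
    _ ≤ δ * p i * (x i / (δ * p i)) :=
      mul_le_mul_of_nonneg_left (Nat.floor_le (div_nonneg (hx i) hδp.le)) hδp.le
    _ = x i := mul_div_cancel₀ _ hδp.ne'

theorem le_Vext (ha : ∀ i, 0 ≤ a i) {x : Fin n → ℝ} (hx : 0 ≤ x) :
    v (rho n p δ x) ≤ Vext n p a δ v x :=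
  le_add_of_nonneg_right <| Finset.sum_nonneg fun i _ =>
    mul_nonneg (ha i) (sub_nonneg.2 (proj_le hδ hp hx i))

theorem monotone_Vext (ha : ∀ i, 0 ≤ a i)
    (hincr : ∀ m i, a i * p i * δ ≤ v (m + Pi.single i 1) - v m) :
    Monotone (Vext n p a δ v) := by
  have hgrid : Monotone fun m : Fin n → ℕ => v m - ∑ i, a i * p i * δ * m i := by
    refine monotone_of_le_add_single fun m i => ?_
    have hsum : ∑ j, a j * p j * δ * ((m + Pi.single i 1 : Fin n → ℕ) j : ℝ) =
        ∑ j, a j * p j * δ * m j + a i * p i * δ := by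
      simp [mul_add, Finset.sum_add_distrib, Pi.single_apply]
    linarith [hincr m i]
  intro x y hxy
  rw [Vext_eq, Vext_eq]
  gcongr ?_ + ?_
  · exact hgrid (rho_mono hδ hp hxy)
  · exact Finset.sum_le_sum fun i _ => mul_le_mul_of_nonneg_left (hxy i) (ha i)

theorem rho_add_smul_le {x : Fin n → ℝ} (hx : 0 ≤ x) (t : ℝ) :
    rho n p δ (x + t • p) ≤ rho n p δ x + ⌈t / δ⌉₊ • 1 := by
  intro i
  have hδp := mul_pos hδ (hp i)
  have hpi := (hp i).ne'
  have hsplit : (x + t • p) i / (δ * p i) = x i / (δ * p i) + t / δ := by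
    simp only [Pi.add_apply, Pi.smul_apply, smul_eq_mul]
    field_simp
  calc ⌊(x + t • p) i / (δ * p i)⌋₊
      ≤ ⌊x i / (δ * p i) + ⌈t / δ⌉₊⌋₊ := by
        rw [hsplit]; exact Nat.floor_le_floor (by gcongr; exact Nat.le_ceil _)
    _ = ⌊x i / (δ * p i)⌋₊ + ⌈t / δ⌉₊ := Nat.floor_add_natCast (div_nonneg (hx i) hδp.le) _
    _ = (rho n p δ x + ⌈t / δ⌉₊ • 1) i := by simp [rho]

theorem apply_rho_add_smul_le (hv0 : ∀ m, 0 ≤ v m) (hv : Monotone v) {C : ℝ} (hC : 0 ≤ C)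
    (hstep : ∀ m, v (m + 1) ≤ v m * Real.exp (C * δ)) {x : Fin n → ℝ} (hx : 0 ≤ x) {t : ℝ}
    (ht : 0 ≤ t) : v (rho n p δ (x + t • p)) ≤ v (rho n p δ x) * Real.exp (C * (t + δ)) := by
  have hceil : ⌈t / δ⌉₊ * δ ≤ t + δ := by
    have := Nat.ceil_lt_add_one (div_nonneg ht hδ.le)
    calc ⌈t / δ⌉₊ * δ ≤ (t / δ + 1) * δ := by gcongr
      _ = t + δ := by field_simp
  calc v (rho n p δ (x + t • p)) ≤ v (rho n p δ x + ⌈t / δ⌉₊ • 1) :=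
        hv (rho_add_smul_le hδ hp hx t)
    _ ≤ v (rho n p δ x) * Real.exp (C * δ) ^ ⌈t / δ⌉₊ :=
        apply_add_nsmul_one_le (Real.exp_nonneg _) hstep _ _
    _ ≤ v (rho n p δ x) * Real.exp (C * (t + δ)) := by
        rw [← Real.exp_nat_mul]
        have : ⌈t / δ⌉₊ * (C * δ) ≤ C * (t + δ) := by
          nlinarith [mul_le_mul_of_nonneg_left hceil hC]
        exact mul_le_mul_of_nonneg_left (Real.exp_le_exp.2 this) (hv0 _)

theorem Vext_add_smul_sub_le (ha : ∀ i, 0 ≤ a i) (hv0 : ∀ m, 0 ≤ v m)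
    (hincr : ∀ m i, a i * p i * δ ≤ v (m + Pi.single i 1) - v m) {C : ℝ} (hC : 0 ≤ C)
    (hdiag : ∀ m, v (m + 1) - v m ≤ v m * (Real.exp (C * δ) - 1)) {x : Fin n → ℝ} (hx : 0 ≤ x)
    {t : ℝ} (ht : 0 ≤ t) :
    Vext n p a δ v (x + t • p) - Vext n p a δ v x ≤
      v (rho n p δ x) * (Real.exp (C * (t + δ)) - 1) + t * ∑ i, a i * p i := by
  have hv : Monotone v := monotone_of_le_add_single fun m i => by
    nlinarith [hincr m i, mul_nonneg (mul_nonneg (ha i) (hp i).le) hδ.le]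
  have hshift := apply_rho_add_smul_le hδ hp hv0 hv hC (fun m => by linarith [hdiag m]) hx ht
  have hgrid : ∑ i, a i * p i * δ * rho n p δ x i ≤ ∑ i, a i * p i * δ * rho n p δ (x + t • p) i :=
    Finset.sum_le_sum fun i _ => by
      have := mul_nonneg (mul_nonneg (ha i) (hp i).le) hδ.le
      gcongr
      exact rho_mono hδ hp (le_add_of_nonneg_right (smul_nonneg ht fun i => (hp i).le)) i
  have hlin : ∑ i, a i * (x + t • p) i = ∑ i, a i * x i + t * ∑ i, a i * p i := by
    simp only [Pi.add_apply, Pi.smul_apply, smul_eq_mul, mul_add, Finset.sum_add_distrib,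
      Finset.mul_sum, mul_left_comm]
  rw [Vext_eq, Vext_eq, hlin]
  linarith

end Extension

theorem stmt10_general (n : ℕ) (p a : Fin n → ℝ)
    (hp : ∀ i, 0 < p i) (ha : ∀ i, 0 < a i)
    (c lam δ : ℝ) (hc : 0 < c) (hlam : 0 < lam) (hδ : 0 < δ)
    (v : ℕ → (Fin n → ℕ) → ℝ) (hv0 : ∀ k m, 0 ≤ v k m)
    (hv1 : ∀ (k : ℕ) (m : Fin n → ℕ) (i : Fin n),
      a i * p i * (δ / 2 ^ k) ≤ v k (m + Pi.single i 1) - v k m)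
    (hv2 : ∀ (k : ℕ) (m : Fin n → ℕ),
      v k (m + 1) - v k m ≤ v k m * (Real.exp ((c + lam) * (δ / 2 ^ k)) - 1))
    (Vbar : (Fin n → ℝ) → ℝ)
    (hlim : ∀ x : Fin n → ℝ, 0 ≤ x →
      Tendsto (fun k => Vext n p a (δ / 2 ^ k) (v k) x) atTop (nhds (Vbar x))) :
    ∀ K : Set (Fin n → ℝ), K ⊆ {x | 0 ≤ x} → IsCompact K →
      TendstoUniformlyOn (fun k => Vext n p a (δ / 2 ^ k) (v k)) Vbar atTop K := by
  intro K hK0 hK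
  have hδk : ∀ k : ℕ, 0 < δ / 2 ^ k := fun k => by positivity
  have ha' : ∀ i, 0 ≤ a i := fun i => (ha i).le
  have hC : 0 ≤ c + lam := by positivity
  have hmono : ∀ k, Monotone (Vext n p a (δ / 2 ^ k) (v k)) := fun k =>
    monotone_Vext (hδk k) hp ha' (hv1 k)
  refine tendstoUniformlyOn_of_finset_bracket hK0 (fun k => (hmono k).monotoneOn _)
    (fun x hx y hy hxy => le_of_tendsto_of_tendsto' (hlim x hx) (hlim y hy) fun k => hmono k hxy)
    hlim fun ε hε => ?_
  obtain ⟨M, hM⟩ := hK.isBounded.bddAbove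
  obtain ⟨B, hB⟩ := (hlim (M ⊔ 0) le_sup_right).bddAbove_range
  have hB0 : 0 ≤ B :=
    (hv0 0 _).trans <| (le_Vext (hδk 0) hp ha' le_sup_right).trans (by simpa using hB ⟨0, rfl⟩)
  obtain ⟨t, ht, htε⟩ := exists_pos_mul_exp_sub_one_add_le B (c + lam) (∑ i, a i * p i) hε
  obtain ⟨S, hS0, hS⟩ := exists_finset_grid_bracket (w := t • p) (fun i => mul_pos ht (hp i)) M
  refine ⟨S, hS0, ?_⟩
  have hδlim : Tendsto (fun k : ℕ => δ / 2 ^ k) atTop (nhds 0) :=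
    tendsto_const_nhds.div_atTop (tendsto_pow_atTop_atTop_of_one_lt one_lt_two)
  filter_upwards [hδlim.eventually (ge_mem_nhds ht)] with k hk x hx
  obtain ⟨s, hs, hst, hsx, hxs⟩ := hS x (hK0 hx) (hM hx)
  refine ⟨s, hs, s + t • p, hst, hsx, hxs, ?_⟩
  have hvB : v k (rho n p (δ / 2 ^ k) s) ≤ B :=
    (le_Vext (hδk k) hp ha' (hS0 hs)).trans <|
      (hmono k ((hsx.trans (hM hx)).trans le_sup_left)).trans (hB ⟨k, rfl⟩)
  calc _ ≤ v k (rho n p (δ / 2 ^ k) s) * (Real.exp ((c + lam) * (t + δ / 2 ^ k)) - 1)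
          + t * ∑ i, a i * p i :=
        Vext_add_smul_sub_le (hδk k) hp ha' (hv0 k) (hv1 k) hC (hv2 k) (hS0 hs) ht.le
    _ ≤ B * (Real.exp ((c + lam) * (2 * t)) - 1) + t * ∑ i, a i * p i := by
        have : 0 ≤ Real.exp ((c + lam) * (t + δ / 2 ^ k)) - 1 := by
          simp only [sub_nonneg, Real.one_le_exp_iff]; positivity
        gcongr
        linarith
    _ ≤ ε := htε

/-- the embedded-grid extensions converge to `V̄` uniformly on compact
subsets of `ℝ₊ⁿ`. -/
theorem stmt10 (n : ℕ) (hn : 1 ≤ n) (p a : Fin n → ℝ)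
    (hp : ∀ i, 0 < p i) (ha : ∀ i, 0 < a i)
    (c lam δ : ℝ) (hc : 0 < c) (hlam : 0 < lam) (hδ : 0 < δ)
    (v : ℕ → (Fin n → ℕ) → ℝ) (hv0 : ∀ k m, 0 ≤ v k m)
    (hv1 : ∀ (k : ℕ) (m : Fin n → ℕ) (i : Fin n),
      a i * p i * (δ / 2 ^ k) ≤ v k (m + Pi.single i 1) - v k m)
    (hv2 : ∀ (k : ℕ) (m : Fin n → ℕ),
      v k (m + 1) - v k m ≤ v k m * (Real.exp ((c + lam) * (δ / 2 ^ k)) - 1))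
    (hmono : ∀ x : Fin n → ℝ, 0 ≤ x → ∀ k,
      Vext n p a (δ / 2 ^ k) (v k) x ≤ Vext n p a (δ / 2 ^ (k + 1)) (v (k + 1)) x)
    (Vbar : (Fin n → ℝ) → ℝ)
    (hlim : ∀ x : Fin n → ℝ, 0 ≤ x →
      Tendsto (fun k => Vext n p a (δ / 2 ^ k) (v k) x) atTop (nhds (Vbar x))) :
    ∀ K : Set (Fin n → ℝ), K ⊆ {x | 0 ≤ x} → IsCompact K →
      TendstoUniformlyOn (fun k => Vext n p a (δ / 2 ^ k) (v k)) Vbar atTop K :=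
  stmt10_general n p a hp ha c lam δ hc hlam hδ v hv0 hv1 hv2 Vbar hlim

end
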